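/- Let (X,τ) be a connected topological space and A ⊆ X a preopen set (A ⊆ interior(closure(A))). For each x ∈ A \ interior(A) let U_x be an open set with x ∈ U_x and U_x ⊆ interior(closure(A)), let I_A be the ideal generated by {U_x \ A : x ∈ A \ interior(A)}, and let τ* be the topology generated by {V \ I : V ∈ τ, I ∈ I_A}. Then (X,τ*) is connected. -/

import Mathlib

/-!
Every member of the ideal generated by the sets `U x \ A` lies in `closure A \ A`, which has empty
interior, so the ideal is codense. For a codense ideal `𝓘` closed under finite unions, attach to a
`τ*`-open set `u` its `τ`-open core: the points with a `τ`-open neighbourhood `V` such that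
`V \ J ⊆ u` for some `J ∈ 𝓘`. The core contains `u`, the cores of `u` and `v` meet inside the core
of `u ∩ v`, and the core is nonempty only if `u` is, since a nonempty open set cannot lie in a
member of `𝓘`. Hence a `τ*`-separation of `X` gives a `τ`-separation.
-/

open TopologicalSpace Set Topology

/-- The ideal generated by the sets `U x \ A` for `x ∈ A \ interior A`. -/
def genIdeal {X : Type*} [TopologicalSpace X] (A : Set X) (U : X → Set X) : Set (Set X) :=
  {S | ∃ F : Finset X, ↑F ⊆ A \ interior A ∧ S ⊆ ⋃ x ∈ F, U x \ A}

/-- The topology `τ*` generated by `{V \ I : V open, I in the ideal}`. -/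
def starTop {X : Type*} [TopologicalSpace X] (I : Set (Set X)) : TopologicalSpace X :=
  generateFrom {s | ∃ V J, IsOpen V ∧ J ∈ I ∧ s = V \ J}

section CodenseIdeal

variable {X : Type*} [TopologicalSpace X] {𝓘 : Set (Set X)}

theorem isTopologicalBasis_starTop (h𝓘_empty : ∅ ∈ 𝓘)
    (h𝓘_union : ∀ I ∈ 𝓘, ∀ J ∈ 𝓘, I ∪ J ∈ 𝓘) :
    @IsTopologicalBasis X (starTop 𝓘) {s | ∃ V J, IsOpen V ∧ J ∈ 𝓘 ∧ s = V \ J} := by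
  refine @IsTopologicalBasis.mk X (starTop 𝓘) _ ?_ ?_ rfl
  · rintro _ ⟨V, I, hV, hI, rfl⟩ _ ⟨W, J, hW, hJ, rfl⟩ x hx
    refine ⟨_, ⟨V ∩ W, I ∪ J, hV.inter hW, h𝓘_union I hI J hJ, ?_⟩, hx, subset_rfl⟩
    ext y
    simp only [mem_inter_iff, mem_sdiff, mem_union]
    tauto
  · exact eq_univ_of_forall fun x => ⟨univ, ⟨univ, ∅, isOpen_univ, h𝓘_empty, by simp⟩, trivial⟩

def idealCore (𝓘 : Set (Set X)) (u : Set X) : Set X :=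
  ⋃₀ {V | IsOpen V ∧ ∃ J ∈ 𝓘, V \ J ⊆ u}

theorem isOpen_idealCore (u : Set X) : IsOpen (idealCore 𝓘 u) :=
  isOpen_sUnion fun _ hV => hV.1

theorem subset_idealCore (h𝓘_empty : ∅ ∈ 𝓘) (h𝓘_union : ∀ I ∈ 𝓘, ∀ J ∈ 𝓘, I ∪ J ∈ 𝓘)
    {u : Set X} (hu : IsOpen[starTop 𝓘] u) : u ⊆ idealCore 𝓘 u := by
  intro x hx
  obtain ⟨_, ⟨V, J, hV, hJ, rfl⟩, hxVJ, hVJu⟩ :=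
    (IsTopologicalBasis.isOpen_iff (t := starTop 𝓘)
      (isTopologicalBasis_starTop h𝓘_empty h𝓘_union)).1 hu x hx
  exact ⟨V, ⟨hV, J, hJ, hVJu⟩, hxVJ.1⟩

theorem idealCore_inter_subset (h𝓘_union : ∀ I ∈ 𝓘, ∀ J ∈ 𝓘, I ∪ J ∈ 𝓘) (u v : Set X) :
    idealCore 𝓘 u ∩ idealCore 𝓘 v ⊆ idealCore 𝓘 (u ∩ v) := by
  rintro x ⟨⟨V, ⟨hV, I, hI, hVIu⟩, hxV⟩, ⟨W, ⟨hW, J, hJ, hWJv⟩, hxW⟩⟩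
  refine ⟨V ∩ W, ⟨hV.inter hW, I ∪ J, h𝓘_union I hI J hJ, ?_⟩, hxV, hxW⟩
  intro y ⟨⟨hyV, hyW⟩, hyIJ⟩
  exact ⟨hVIu ⟨hyV, fun h => hyIJ (.inl h)⟩, hWJv ⟨hyW, fun h => hyIJ (.inr h)⟩⟩

theorem Set.Nonempty.of_idealCore (h𝓘_codense : ∀ I ∈ 𝓘, interior I = ∅) {u : Set X}
    (hu : (idealCore 𝓘 u).Nonempty) : u.Nonempty := by
  obtain ⟨x, V, ⟨hV, J, hJ, hVJu⟩, hxV⟩ := hu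
  by_contra hu_empty
  have hVJ : V ⊆ J := by
    simpa [sdiff_eq_empty, not_nonempty_iff_eq_empty.1 hu_empty] using hVJu
  simpa [h𝓘_codense J hJ] using interior_maximal hVJ hV hxV

theorem connectedSpace_starTop [ConnectedSpace X] (h𝓘_empty : ∅ ∈ 𝓘)
    (h𝓘_union : ∀ I ∈ 𝓘, ∀ J ∈ 𝓘, I ∪ J ∈ 𝓘) (h𝓘_codense : ∀ I ∈ 𝓘, interior I = ∅) :
    @ConnectedSpace X (starTop 𝓘) := by
  refine @ConnectedSpace.mk X (starTop 𝓘)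
    (@PreconnectedSpace.mk X (starTop 𝓘) fun u v hu hv huv ⟨a, _, ha⟩ ⟨b, _, hb⟩ => ?_)
    inferInstance
  have hu_core := subset_idealCore h𝓘_empty h𝓘_union hu
  have hv_core := subset_idealCore h𝓘_empty h𝓘_union hv
  obtain ⟨x, -, hx⟩ := isPreconnected_univ _ _ (isOpen_idealCore u) (isOpen_idealCore v)
    (huv.trans (union_subset_union hu_core hv_core)) ⟨a, trivial, hu_core ha⟩
    ⟨b, trivial, hv_core hb⟩
  obtain ⟨y, hy⟩ := Nonempty.of_idealCore h𝓘_codense ⟨x, idealCore_inter_subset h𝓘_union u v hx⟩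
  exact ⟨y, trivial, hy⟩

end CodenseIdeal

theorem interior_closure_diff_self {X : Type*} [TopologicalSpace X] (A : Set X) :
    interior (closure A \ A) = ∅ := by
  have hdisj : Disjoint (interior (closure A \ A)) A :=
    disjoint_left.2 fun _ hx => (interior_subset hx).2
  exact (hdisj.closure_right isOpen_interior).eq_bot_of_le fun _ hx => (interior_subset hx).1

section genIdeal

variable {X : Type*} [TopologicalSpace X] {A : Set X} {U : X → Set X}

theorem empty_mem_genIdeal : ∅ ∈ genIdeal A U :=
  ⟨∅, by simp, empty_subset _⟩

theorem union_mem_genIdeal {I J : Set X} (hI : I ∈ genIdeal A U) (hJ : J ∈ genIdeal A U) :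
    I ∪ J ∈ genIdeal A U := by
  classical
  obtain ⟨F, hFA, hIF⟩ := hI
  obtain ⟨G, hGA, hJG⟩ := hJ
  refine ⟨F ∪ G, by push_cast; exact union_subset hFA hGA, ?_⟩
  rw [Finset.set_biUnion_union]
  exact union_subset_union hIF hJG

theorem interior_eq_empty_of_mem_genIdeal
    (hUsub : ∀ x ∈ A \ interior A, U x ⊆ interior (closure A)) {I : Set X}
    (hI : I ∈ genIdeal A U) : interior I = ∅ := by
  obtain ⟨F, hFA, hIF⟩ := hI
  have hI_sub : I ⊆ closure A \ A := hIF.trans <| iUnion₂_subset fun x hx =>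
    sdiff_subset_sdiff_left ((hUsub x (hFA hx)).trans interior_subset)
  exact subset_empty_iff.1 (interior_closure_diff_self A ▸ interior_mono hI_sub)

end genIdeal

theorem stmt12_general {X : Type*} [TopologicalSpace X] [ConnectedSpace X] (A : Set X)
    (U : X → Set X)
    (hUsub : ∀ x ∈ A \ interior A, U x ⊆ interior (closure A)) :
    @ConnectedSpace X (starTop (genIdeal A U)) :=
  connectedSpace_starTop empty_mem_genIdeal (fun _ hI _ hJ => union_mem_genIdeal hI hJ)
    fun _ => interior_eq_empty_of_mem_genIdeal hUsub

theorem stmt12 {X : Type*} [TopologicalSpace X] [ConnectedSpace X] (A : Set X)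
    (hA : A ⊆ interior (closure A))
    (U : X → Set X)
    (hUopen : ∀ x ∈ A \ interior A, IsOpen (U x))
    (hUmem : ∀ x ∈ A \ interior A, x ∈ U x)
    (hUsub : ∀ x ∈ A \ interior A, U x ⊆ interior (closure A)) :
    @ConnectedSpace X (starTop (genIdeal A U)) :=
  stmt12_general A U hUsub
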